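/- arXiv:2002.05050 — 5 statements merged into one kernel-verified Lean document; each statement's English description precedes it below -/
import Mathlib

section
/- Let L_t, C_t > 0, r1 > 0, V* > 0, I_t* = I_L(V*), and let I_t, V : ℝ → ℝ be differentiable functions with V(t) > 0 for all t, satisfying the closed-loop DGU dynamics with zero disturbance: L_t·İ_t = −r1·(I_t − I_t*) − (V − V*) and C_t·V̇ = (I_t − I_t*) − r2(V)·(V − V*), where r2(V) = Y_L − P_L/(V·V*). Define the shaped Hamiltonian H_c(t) = (L_t/2)·(I_t(t) − I_t*)² + (C_t/2)·(V(t) − V*)². Then for all t, dH_c/dt = −r1·(I_t(t) − I_t*)² − r2(V(t))·(V(t) − V*)²; moreover, if Y_L·V(t)·V* > P_L and (I_t(t), V(t)) ≠ (I_t*, V*), then dH_c/dt < 0 at t. -/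
/-!
Differentiating the storage function `H_c`, the interconnection terms `∓(I_t - I_t*)(V - V*)`
of the two dynamics cancel (they form the skew-symmetric part of the port-Hamiltonian
structure), leaving only the damping `-r1·(I_t - I_t*)² - r2(V)·(V - V*)²`. For positive
`V·V*`, the load condition `Y_L·V·V* > P_L` is exactly `r2(V) > 0`, so this is negative
off the equilibrium.
-/

/-- ZIP load current: I_L(V) = Y_L·V + Ī_L + P_L/V. -/
noncomputable def ZIPload (YL ILbar PL V : ℝ) : ℝ := YL * V + ILbar + PL / V

/-- Stated as effort `f - a` times flow `c · f'`, so that a dynamics `c · f' = …` substitutes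
directly. -/
theorem HasDerivAt.half_mul_sub_sq {f : ℝ → ℝ} {f' : ℝ} {t : ℝ} (hf : HasDerivAt f f' t)
    (c a : ℝ) :
    HasDerivAt (fun τ => c / 2 * (f τ - a) ^ 2) ((f t - a) * (c * f')) t :=
  (((hf.sub_const a).pow 2).const_mul (c / 2)).congr_deriv (by ring)

theorem sub_div_pos_of_lt_mul {y p x : ℝ} (hx : 0 < x) (h : p < y * x) : 0 < y - p / x := by
  rwa [sub_pos, div_lt_iff₀ hx]

theorem add_mul_sq_sub_pos_of_ne {a b x y x₀ y₀ : ℝ} (ha : 0 < a) (hb : 0 < b)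
    (hne : (x, y) ≠ (x₀, y₀)) : 0 < a * (x - x₀) ^ 2 + b * (y - y₀) ^ 2 := by
  rcases eq_or_ne x x₀ with rfl | hx
  · have hy : y - y₀ ≠ 0 := sub_ne_zero.mpr fun h => hne (by rw [h])
    simpa using mul_pos hb (pow_two_pos_of_ne_zero hy)
  · have := mul_pos ha (pow_two_pos_of_ne_zero (sub_ne_zero.mpr hx))
    positivity

theorem closed_loop_hamiltonian_dissipation_general
    (Lt Ct r1 Vs YL PL : ℝ)
    (hr1 : 0 < r1) (hVs : 0 < Vs)
    (Its : ℝ)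
    (It V : ℝ → ℝ)
    (hItd : Differentiable ℝ It) (hVd : Differentiable ℝ V)
    (hVpos : ∀ t, 0 < V t)
    (hdyn1 : ∀ t, Lt * deriv It t = -r1 * (It t - Its) - (V t - Vs))
    (hdyn2 : ∀ t, Ct * deriv V t =
      (It t - Its) - (YL - PL / (V t * Vs)) * (V t - Vs)) :
    (∀ t, deriv (fun τ => Lt / 2 * (It τ - Its) ^ 2 + Ct / 2 * (V τ - Vs) ^ 2) t
        = -r1 * (It t - Its) ^ 2 - (YL - PL / (V t * Vs)) * (V t - Vs) ^ 2) ∧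
    (∀ t, YL * V t * Vs > PL → (It t, V t) ≠ (Its, Vs) →
      deriv (fun τ => Lt / 2 * (It τ - Its) ^ 2 + Ct / 2 * (V τ - Vs) ^ 2) t < 0) := by
  have hdissipation : ∀ t,
      deriv (fun τ => Lt / 2 * (It τ - Its) ^ 2 + Ct / 2 * (V τ - Vs) ^ 2) t
        = -r1 * (It t - Its) ^ 2 - (YL - PL / (V t * Vs)) * (V t - Vs) ^ 2 := fun t => by
    refine (((hItd t).hasDerivAt.half_mul_sub_sq Lt Its).add
      ((hVd t).hasDerivAt.half_mul_sub_sq Ct Vs)).deriv.trans ?_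
    rw [hdyn1, hdyn2]
    ring
  refine ⟨hdissipation, fun t hpassive hne => ?_⟩
  have hr2 : 0 < YL - PL / (V t * Vs) :=
    sub_div_pos_of_lt_mul (mul_pos (hVpos t) hVs) (by linarith)
  have := add_mul_sq_sub_pos_of_ne hr1 hr2 hne
  linarith [hdissipation t]

/-- along solutions of the undisturbed closed-loop DGU dynamics
the shaped Hamiltonian dissipates with rate
−r1·(I_t − I_t*)² − r2(V)·(V − V*)², and strictly whenever the state is off
the equilibrium and the load passivity condition holds. -/
theorem closed_loop_hamiltonian_dissipation
    (Lt Ct r1 Vs YL ILbar PL : ℝ)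
    (hLt : 0 < Lt) (hCt : 0 < Ct) (hr1 : 0 < r1) (hVs : 0 < Vs)
    (hYL : 0 < YL) (hIL : 0 < ILbar) (hPL : 0 < PL)
    (Its : ℝ) (hIts : Its = ZIPload YL ILbar PL Vs)
    (It V : ℝ → ℝ)
    (hItd : Differentiable ℝ It) (hVd : Differentiable ℝ V)
    (hVpos : ∀ t, 0 < V t)
    (hdyn1 : ∀ t, Lt * deriv It t = -r1 * (It t - Its) - (V t - Vs))
    (hdyn2 : ∀ t, Ct * deriv V t =
      (It t - Its) - (YL - PL / (V t * Vs)) * (V t - Vs)) :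
    (∀ t, deriv (fun τ => Lt / 2 * (It τ - Its) ^ 2 + Ct / 2 * (V τ - Vs) ^ 2) t
        = -r1 * (It t - Its) ^ 2 - (YL - PL / (V t * Vs)) * (V t - Vs) ^ 2) ∧
    (∀ t, YL * V t * Vs > PL → (It t, V t) ≠ (Its, Vs) →
      deriv (fun τ => Lt / 2 * (It τ - Its) ^ 2 + Ct / 2 * (V τ - Vs) ^ 2) t < 0) :=
  closed_loop_hamiltonian_dissipation_general Lt Ct r1 Vs YL PL hr1 hVs Its It V hItd hVd hVpos
    hdyn1 hdyn2
end

section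
/- Let L_t, C_t > 0, r1 > 0, k_I > 0, V* > 0, I_t* = I_L(V*), and let I_N ∈ ℝ be a constant disturbance. Consider the extended closed-loop DGU dynamics with integral action, with state (I_t, V, z_e) ∈ ℝ × (0,∞) × ℝ: L_t·İ_t = −r1·(I_t − I_t*) − (V − V*) − r1·z_e − k_I·L_t·(V − V*), C_t·V̇ = (I_t − I_t*) − r2(V)·(V − V*) − I_N, ż_e = k_I·(V − V*), where r2(V) = Y_L − P_L/(V·V*). Then (I_t, V, z_e) = (I_L(V*) + I_N, V*, −I_N) is an equilibrium of this system, and it is the unique equilibrium; in particular the steady-state voltage error is zero despite the disturbance. -/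
/-! The equilibrium equations are triangular: ż_e = 0 forces V = V* since k_I ≠ 0, the capacitor
equation then pins I_t = I_L(V*) + I_N, and the inductor equation leaves r1·(z_e + I_N) = 0. -/

theorem ia_equilibrium_unique_general
    (Lt r1 kI Vs YL ILbar PL : ℝ)
    (hr1 : 0 < r1) (hkI : 0 < kI)
    (Its : ℝ) (hIts : Its = ZIPload YL ILbar PL Vs)
    (IN : ℝ) :
    (-r1 * (ZIPload YL ILbar PL Vs + IN - Its) - (Vs - Vs)
        - r1 * (-IN) - kI * Lt * (Vs - Vs) = 0 ∧
      (ZIPload YL ILbar PL Vs + IN - Its)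
        - (YL - PL / (Vs * Vs)) * (Vs - Vs) - IN = 0 ∧
      kI * (Vs - Vs) = 0) ∧
    (∀ It V ze : ℝ, 0 < V →
      -r1 * (It - Its) - (V - Vs) - r1 * ze - kI * Lt * (V - Vs) = 0 →
      (It - Its) - (YL - PL / (V * Vs)) * (V - Vs) - IN = 0 →
      kI * (V - Vs) = 0 →
      It = ZIPload YL ILbar PL Vs + IN ∧ V = Vs ∧ ze = -IN) := by
  subst hIts
  refine ⟨⟨by ring, by ring, by ring⟩, fun It V ze _ hCurrent hVoltage hIntegrator => ?_⟩
  obtain rfl : V = Vs := sub_eq_zero.mp ((mul_eq_zero.mp hIntegrator).resolve_left hkI.ne')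
  have hIt : It = ZIPload YL ILbar PL V + IN := by linear_combination hVoltage
  refine ⟨hIt, rfl, mul_left_cancel₀ hr1.ne' ?_⟩
  linear_combination -hCurrent - r1 * hIt

/-- with integral action, (I_L(V*) + I_N, V*, −I_N) is the unique
equilibrium of the extended closed-loop DGU dynamics; in particular the
steady-state voltage error is zero despite the disturbance. -/
theorem ia_equilibrium_unique
    (Lt Ct r1 kI Vs YL ILbar PL : ℝ)
    (hLt : 0 < Lt) (hCt : 0 < Ct) (hr1 : 0 < r1) (hkI : 0 < kI) (hVs : 0 < Vs)
    (hYL : 0 < YL) (hIL : 0 < ILbar) (hPL : 0 < PL)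
    (Its : ℝ) (hIts : Its = ZIPload YL ILbar PL Vs)
    (IN : ℝ) :
    (-r1 * (ZIPload YL ILbar PL Vs + IN - Its) - (Vs - Vs)
        - r1 * (-IN) - kI * Lt * (Vs - Vs) = 0 ∧
      (ZIPload YL ILbar PL Vs + IN - Its)
        - (YL - PL / (Vs * Vs)) * (Vs - Vs) - IN = 0 ∧
      kI * (Vs - Vs) = 0) ∧
    (∀ It V ze : ℝ, 0 < V →
      -r1 * (It - Its) - (V - Vs) - r1 * ze - kI * Lt * (V - Vs) = 0 →
      (It - Its) - (YL - PL / (V * Vs)) * (V - Vs) - IN = 0 →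
      kI * (V - Vs) = 0 →
      It = ZIPload YL ILbar PL Vs + IN ∧ V = Vs ∧ ze = -IN) :=
  ia_equilibrium_unique_general Lt r1 kI Vs YL ILbar PL hr1 hkI Its hIts IN
end

section
/- Let L_t, C_t > 0, r1 ≥ 0, k_I > 0, V* > 0, I_t* = I_L(V*), I_N ∈ ℝ constant, and let (I_t, V, z_e) : ℝ → ℝ × (0,∞) × ℝ be a differentiable solution of the extended closed-loop DGU dynamics with integral action: L_t·İ_t = −r1·(I_t − I_t*) − (V − V*) − r1·z_e − k_I·L_t·(V − V*), C_t·V̇ = (I_t − I_t*) − r2(V)·(V − V*) − I_N, ż_e = k_I·(V − V*), with r2(V) = Y_L − P_L/(V·V*). Define the shifted Hamiltonian H̃(t) = (L_t/2)·(I_t − I_t* + z_e)² + (C_t/2)·(V − V*)² + (1/(2·k_I))·(z_e + I_N)². Then along the solution, dH̃/dt = −r1·(I_t(t) − I_t* + z_e(t))² − r2(V(t))·(V(t) − V*)²; in particular dH̃/dt ≤ 0 whenever r1 ≥ 0 and Y_L·V(t)·V* ≥ P_L, so the integral action preserves the dissipativity assigned by the IDA-PBC controller. -/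
theorem HasDerivAt.half_mul_sq {f : ℝ → ℝ} {f' t : ℝ} (c : ℝ) (hf : HasDerivAt f f' t) :
    HasDerivAt (fun τ => c / 2 * f τ ^ 2) (f t * (c * f')) t :=
  ((hf.fun_pow 2).const_mul (c / 2)).congr_deriv (by ring)

noncomputable def shiftedHamiltonian (Lt Ct kI Its Vs IN : ℝ) (It V ze : ℝ → ℝ) (τ : ℝ) : ℝ :=
  Lt / 2 * (It τ - Its + ze τ) ^ 2 + Ct / 2 * (V τ - Vs) ^ 2 + 1 / (2 * kI) * (ze τ + IN) ^ 2

section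

variable {Lt Ct kI Its Vs IN : ℝ} {It V ze : ℝ → ℝ} {t : ℝ}

theorem hasDerivAt_shiftedHamiltonian (hIt : DifferentiableAt ℝ It t)
    (hV : DifferentiableAt ℝ V t) (hze : DifferentiableAt ℝ ze t) :
    HasDerivAt (shiftedHamiltonian Lt Ct kI Its Vs IN It V ze)
      ((It t - Its + ze t) * (Lt * deriv It t + Lt * deriv ze t)
        + (V t - Vs) * (Ct * deriv V t) + (ze t + IN) * (1 / kI * deriv ze t)) t := by
  have hE := ((hIt.hasDerivAt.sub_const Its).fun_add hze.hasDerivAt).half_mul_sq Lt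
  have hU := (hV.hasDerivAt.sub_const Vs).half_mul_sq Ct
  have hZ := (hze.hasDerivAt.add_const IN).half_mul_sq (1 / kI)
  rw [div_div, mul_comm kI] at hZ
  exact ((hE.fun_add hU).fun_add hZ).congr_deriv (by ring)

/-- Here `r2` is the load conductance `r2(V t)` at the single time `t`. -/
theorem deriv_shiftedHamiltonian_eq {r1 r2 : ℝ} (hkI : kI ≠ 0)
    (hIt : DifferentiableAt ℝ It t) (hV : DifferentiableAt ℝ V t)
    (hze : DifferentiableAt ℝ ze t)
    (hdyn1 : Lt * deriv It t = -r1 * (It t - Its) - (V t - Vs)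
        - r1 * ze t - kI * Lt * (V t - Vs))
    (hdyn2 : Ct * deriv V t = (It t - Its) - r2 * (V t - Vs) - IN)
    (hdyn3 : deriv ze t = kI * (V t - Vs)) :
    deriv (shiftedHamiltonian Lt Ct kI Its Vs IN It V ze) t
      = -r1 * (It t - Its + ze t) ^ 2 - r2 * (V t - Vs) ^ 2 := by
  rw [(hasDerivAt_shiftedHamiltonian hIt hV hze).deriv, hdyn1, hdyn2, hdyn3,
    one_div, inv_mul_cancel_left₀ hkI]
  ring

end

theorem zip_conductance_nonneg {YL PL v Vs : ℝ} (hv : 0 < v) (hVs : 0 < Vs)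
    (h : YL * v * Vs ≥ PL) : 0 ≤ YL - PL / (v * Vs) := by
  rw [sub_nonneg, div_le_iff₀ (by positivity)]
  linarith

theorem ia_hamiltonian_dissipation_general
    (Lt Ct r1 kI Vs YL PL : ℝ)
    (hr1 : 0 ≤ r1) (hkI : 0 < kI) (hVs : 0 < Vs)
    (Its : ℝ)
    (IN : ℝ)
    (It V ze : ℝ → ℝ)
    (hItd : Differentiable ℝ It) (hVd : Differentiable ℝ V)
    (hzed : Differentiable ℝ ze)
    (hVpos : ∀ t, 0 < V t)
    (hdyn1 : ∀ t, Lt * deriv It t = -r1 * (It t - Its) - (V t - Vs)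
        - r1 * ze t - kI * Lt * (V t - Vs))
    (hdyn2 : ∀ t, Ct * deriv V t =
        (It t - Its) - (YL - PL / (V t * Vs)) * (V t - Vs) - IN)
    (hdyn3 : ∀ t, deriv ze t = kI * (V t - Vs)) :
    (∀ t, deriv (fun τ => Lt / 2 * (It τ - Its + ze τ) ^ 2
          + Ct / 2 * (V τ - Vs) ^ 2 + 1 / (2 * kI) * (ze τ + IN) ^ 2) t
        = -r1 * (It t - Its + ze t) ^ 2
          - (YL - PL / (V t * Vs)) * (V t - Vs) ^ 2) ∧
    (∀ t, YL * V t * Vs ≥ PL →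
      deriv (fun τ => Lt / 2 * (It τ - Its + ze τ) ^ 2
          + Ct / 2 * (V τ - Vs) ^ 2 + 1 / (2 * kI) * (ze τ + IN) ^ 2) t ≤ 0) := by
  have balance (t : ℝ) := deriv_shiftedHamiltonian_eq (IN := IN) hkI.ne' (hItd t) (hVd t)
    (hzed t) (hdyn1 t) (hdyn2 t) (hdyn3 t)
  refine ⟨balance, fun t hload => (balance t).trans_le ?_⟩
  have hr2 := zip_conductance_nonneg (hVpos t) hVs hload
  linarith [mul_nonneg hr1 (sq_nonneg (It t - Its + ze t)), mul_nonneg hr2 (sq_nonneg (V t - Vs))]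

/-- integral action preserves the dissipativity assigned by
IDA-PBC: along solutions of the extended closed loop, the shifted Hamiltonian
H̃ satisfies dH̃/dt = −r1·(I_t − I_t* + z_e)² − r2(V)·(V − V*)² ≤ 0 whenever
r1 ≥ 0 and Y_L·V·V* ≥ P_L. -/
theorem ia_hamiltonian_dissipation
    (Lt Ct r1 kI Vs YL ILbar PL : ℝ)
    (hLt : 0 < Lt) (hCt : 0 < Ct) (hr1 : 0 ≤ r1) (hkI : 0 < kI) (hVs : 0 < Vs)
    (hYL : 0 < YL) (hIL : 0 < ILbar) (hPL : 0 < PL)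
    (Its : ℝ) (hIts : Its = ZIPload YL ILbar PL Vs)
    (IN : ℝ)
    (It V ze : ℝ → ℝ)
    (hItd : Differentiable ℝ It) (hVd : Differentiable ℝ V)
    (hzed : Differentiable ℝ ze)
    (hVpos : ∀ t, 0 < V t)
    (hdyn1 : ∀ t, Lt * deriv It t = -r1 * (It t - Its) - (V t - Vs)
        - r1 * ze t - kI * Lt * (V t - Vs))
    (hdyn2 : ∀ t, Ct * deriv V t =
        (It t - Its) - (YL - PL / (V t * Vs)) * (V t - Vs) - IN)
    (hdyn3 : ∀ t, deriv ze t = kI * (V t - Vs)) :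
    (∀ t, deriv (fun τ => Lt / 2 * (It τ - Its + ze τ) ^ 2
          + Ct / 2 * (V τ - Vs) ^ 2 + 1 / (2 * kI) * (ze τ + IN) ^ 2) t
        = -r1 * (It t - Its + ze t) ^ 2
          - (YL - PL / (V t * Vs)) * (V t - Vs) ^ 2) ∧
    (∀ t, YL * V t * Vs ≥ PL →
      deriv (fun τ => Lt / 2 * (It τ - Its + ze τ) ^ 2
          + Ct / 2 * (V τ - Vs) ^ 2 + 1 / (2 * kI) * (ze τ + IN) ^ 2) t ≤ 0) :=
  ia_hamiltonian_dissipation_general Lt Ct r1 kI Vs YL PL hr1 hkI hVs Its IN It V ze hItd hVd hzed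
    hVpos hdyn1 hdyn2 hdyn3
end

section
/- Let L_t, C_t > 0, r1 ≥ 0, k_I > 0, V* > 0, I_t* = I_L(V*), I_N ∈ ℝ constant, and let (I_t, V, z_e) : ℝ → ℝ × (0,∞) × ℝ be a differentiable solution of the extended closed-loop DGU dynamics with integral action: L_t·İ_t = −r1·(I_t − I_t*) − (V − V*) − r1·z_e − k_I·L_t·(V − V*), C_t·V̇ = (I_t − I_t*) − r2(V)·(V − V*) − I_N, ż_e = k_I·(V − V*), with r2(V) = Y_L − P_L/(V·V*). Define the transformed coordinates ζ(t) = L_t·(I_t(t) − I_t* + z_e(t)) and z_h(t) = C_t·V(t), and set z_h* = C_t·V*. Then the transformed state satisfies the port-Hamiltonian-form equations ζ̇ = −(r1/L_t)·ζ − (z_h − z_h*)/C_t, ż_h = ζ/L_t − r2(V)·(z_h − z_h*)/C_t − (z_e + I_N), ż_e = (k_I/C_t)·(z_h − z_h*); i.e., the state transformation brings the integral-action closed loop into port-Hamiltonian form with skew-symmetric interconnection entries ±1, ±k_I and damping r1, r2(V). -/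
theorem deriv_const_mul_sub_const_add {𝕜 : Type*} [NontriviallyNormedField 𝕜]
    {f g : 𝕜 → 𝕜} {x : 𝕜} (c a : 𝕜) (hf : DifferentiableAt 𝕜 f x)
    (hg : DifferentiableAt 𝕜 g x) :
    deriv (fun y => c * (f y - a + g y)) x = c * (deriv f x + deriv g x) :=
  (((hf.hasDerivAt.sub_const a).add hg.hasDerivAt).const_mul c).deriv

theorem ia_state_transformation_phs_form_general
    (Lt Ct r1 kI Vs YL PL : ℝ)
    (hLt : 0 < Lt) (hCt : 0 < Ct)
    (Its : ℝ)
    (IN : ℝ)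
    (It V ze : ℝ → ℝ)
    (hItd : Differentiable ℝ It)
    (hzed : Differentiable ℝ ze)
    (hdyn1 : ∀ t, Lt * deriv It t = -r1 * (It t - Its) - (V t - Vs)
        - r1 * ze t - kI * Lt * (V t - Vs))
    (hdyn2 : ∀ t, Ct * deriv V t =
        (It t - Its) - (YL - PL / (V t * Vs)) * (V t - Vs) - IN)
    (hdyn3 : ∀ t, deriv ze t = kI * (V t - Vs)) :
    ∀ t,
      deriv (fun τ => Lt * (It τ - Its + ze τ)) t
          = -(r1 / Lt) * (Lt * (It t - Its + ze t))
            - (Ct * V t - Ct * Vs) / Ct ∧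
      deriv (fun τ => Ct * V τ) t
          = (Lt * (It t - Its + ze t)) / Lt
            - (YL - PL / (V t * Vs)) * ((Ct * V t - Ct * Vs) / Ct)
            - (ze t + IN) ∧
      deriv ze t = (kI / Ct) * (Ct * V t - Ct * Vs) := by
  intro t
  have hζ := deriv_const_mul_sub_const_add Lt Its (hItd t) (hzed t)
  have hzh : deriv (fun τ => Ct * V τ) t = Ct * deriv V t := deriv_const_mul_field Ct
  have hΔ : (Ct * V t - Ct * Vs) / Ct = V t - Vs := by
    rw [← mul_sub, mul_div_cancel_left₀ _ hCt.ne']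
  rw [hζ, hzh, hΔ]
  refine ⟨?_, ?_, ?_⟩
  · -- the integral term −k_I·L_t·(V − V*) of the controller is cancelled by L_t·ż_e
    field_simp
    linear_combination hdyn1 t + Lt * hdyn3 t
  · field_simp
    linear_combination hdyn2 t
  · rw [hdyn3 t]
    field_simp

/-- the state transformation ζ = L_t·(I_t − I_t* + z_e),
z_h = C_t·V brings the integral-action closed loop into port-Hamiltonian
form with skew-symmetric interconnection ±1, ±k_I and damping r1, r2(V). -/
theorem ia_state_transformation_phs_form
    (Lt Ct r1 kI Vs YL ILbar PL : ℝ)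
    (hLt : 0 < Lt) (hCt : 0 < Ct) (hr1 : 0 ≤ r1) (hkI : 0 < kI) (hVs : 0 < Vs)
    (hYL : 0 < YL) (hIL : 0 < ILbar) (hPL : 0 < PL)
    (Its : ℝ) (hIts : Its = ZIPload YL ILbar PL Vs)
    (IN : ℝ)
    (It V ze : ℝ → ℝ)
    (hItd : Differentiable ℝ It) (hVd : Differentiable ℝ V)
    (hzed : Differentiable ℝ ze)
    (hVpos : ∀ t, 0 < V t)
    (hdyn1 : ∀ t, Lt * deriv It t = -r1 * (It t - Its) - (V t - Vs)
        - r1 * ze t - kI * Lt * (V t - Vs))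
    (hdyn2 : ∀ t, Ct * deriv V t =
        (It t - Its) - (YL - PL / (V t * Vs)) * (V t - Vs) - IN)
    (hdyn3 : ∀ t, deriv ze t = kI * (V t - Vs)) :
    ∀ t,
      deriv (fun τ => Lt * (It τ - Its + ze τ)) t
          = -(r1 / Lt) * (Lt * (It t - Its + ze t))
            - (Ct * V t - Ct * Vs) / Ct ∧
      deriv (fun τ => Ct * V τ) t
          = (Lt * (It t - Its + ze t)) / Lt
            - (YL - PL / (V t * Vs)) * ((Ct * V t - Ct * Vs) / Ct)
            - (ze t + IN) ∧
      deriv ze t = (kI / Ct) * (Ct * V t - Ct * Vs) :=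
  ia_state_transformation_phs_form_general Lt Ct r1 kI Vs YL PL hLt hCt Its IN It V ze hItd hzed
    hdyn1 hdyn2 hdyn3
end

section
/- Consider a DC microgrid of N DGU nodes and M RL lines with end-node maps a, b : Fin M → Fin N. For each node i let L_t(i), C_t(i) > 0, r1(i) > 0, V*(i) > 0, Y_L(i), Ī_L(i), P_L(i) > 0, I_t*(i) = I_L,i(V*(i)), and for each line e let L(e), R(e) > 0. Suppose the reference values are network-consistent: for each line e, R(e)·I*(e) = V*(a(e)) − V*(b(e)), and for each node i, Σ_{e : a(e)=i} I*(e) − Σ_{e : b(e)=i} I*(e) = 0. Let differentiable functions I_t(i,·), V(i,·) with V(i,t) > 0, and I(e,·) satisfy the interconnected closed-loop dynamics: L_t(i)·İ_t(i) = −r1(i)·(I_t(i) − I_t*(i)) − (V(i) − V*(i)), C_t(i)·V̇(i) = (I_t(i) − I_t*(i)) − r2_i(V(i))·(V(i) − V*(i)) − I_N(i), with I_N(i) = Σ_{e : a(e)=i} I(e) − Σ_{e : b(e)=i} I(e) and r2_i(V) = Y_L(i) − P_L(i)/(V·V*(i)), and L(e)·İ(e) = −R(e)·I(e) + V(a(e))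 − V(b(e)). Define the microgrid Hamiltonian H_MG(t) = Σ_i [(L_t(i)/2)·(I_t(i) − I_t*(i))² + (C_t(i)/2)·(V(i) − V*(i))²] + Σ_e (L(e)/2)·(I(e) − I*(e))². Then dH_MG/dt = −Σ_i [r1(i)·(I_t(i) − I_t*(i))² + r2_i(V(i))·(V(i) − V*(i))²] − Σ_e R(e)·(I(e) − I*(e))²; moreover, if additionally Y_L(i)·V(i,t)·V*(i) > P_L(i) for all i, then dH_MG/dt ≤ 0 with equality at time t only if I_t(i,t) = I_t*(i), V(i,t) = V*(i) for all i and I(e,t) = I*(e) for all e. -/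
open Finset

/-!
The Hamiltonian is a sum of quadratic storage functions, so along any trajectory its
derivative is the supplied power `∑ (x - x*) · (c ẋ)`. Shifting the dynamics to the
operating point (which is itself a network-consistent equilibrium of the lines and nodes)
leaves only dissipative terms and the node/line coupling terms
`∑ᵢ ṽᵢ · (net current)ᵢ` and `∑ₑ ĩₑ · (ṽ_{a e} - ṽ_{b e})`. These cancel by Tellegen's
theorem: the incidence map sending line currents to net node currents is the transpose of
the map sending node potentials to line voltage drops.
-/

section Incidence

variable {ε ν R : Type*} [Fintype ε] [DecidableEq ν]

def netCurrent [AddCommGroup R] (a b : ε → ν) (f : ε → R) (i : ν) : R :=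
  ∑ e ∈ univ.filter (fun e => a e = i), f e - ∑ e ∈ univ.filter (fun e => b e = i), f e

theorem netCurrent_sub [AddCommGroup R] (a b : ε → ν) (f g : ε → R) (i : ν) :
    netCurrent a b (f - g) i = netCurrent a b f i - netCurrent a b g i := by
  simp only [netCurrent, Pi.sub_apply, sum_sub_distrib]
  abel

theorem sum_mul_sum_fiber [Fintype ν] [CommSemiring R] (g : ε → ν) (x : ν → R) (f : ε → R) :
    ∑ i, x i * ∑ e ∈ univ.filter (fun e => g e = i), f e = ∑ e, x (g e) * f e := by
  rw [← sum_fiberwise univ g (fun e => x (g e) * f e)]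
  refine sum_congr rfl fun i _ => ?_
  rw [mul_sum]
  refine sum_congr rfl fun e he => ?_
  rw [(mem_filter.mp he).2]

theorem sum_mul_netCurrent [Fintype ν] [CommRing R] (a b : ε → ν) (x : ν → R) (f : ε → R) :
    ∑ i, x i * netCurrent a b f i = ∑ e, (x (a e) - x (b e)) * f e := by
  simp only [netCurrent, mul_sub, sum_sub_distrib, sum_mul_sum_fiber, sub_mul]

end Incidence

theorem hasDerivAt_sum_half_mul_sq_sub {ι : Type*} [Fintype ι] (c xs : ι → ℝ)
    (x : ι → ℝ → ℝ) {t : ℝ} (hx : ∀ i, DifferentiableAt ℝ (x i) t) :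
    HasDerivAt (fun τ => ∑ i, c i / 2 * (x i τ - xs i) ^ 2)
      (∑ i, (x i t - xs i) * (c i * deriv (x i) t)) t := by
  refine HasDerivAt.fun_sum fun i _ => ?_
  refine ((((hx i).hasDerivAt).sub_const (xs i)).fun_pow 2).const_mul (c i / 2) |>.congr_deriv ?_
  ring

/-- In deviation coordinates `x, v, j` from the operating point, `dx, dv, dj` play the roles
of `Lₜ İₜ`, `Cₜ V̇` and `L İ`. -/
theorem closedLoop_power_balance {ε ν : Type*} [Fintype ε] [Fintype ν] [DecidableEq ν]
    (a b : ε → ν) (r1 r2 : ν → ℝ) (R : ε → ℝ) (x v dx dv : ν → ℝ) (j dj : ε → ℝ)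
    (hx : ∀ i, dx i = -r1 i * x i - v i)
    (hv : ∀ i, dv i = x i - r2 i * v i - netCurrent a b j i)
    (hj : ∀ e, dj e = -R e * j e + v (a e) - v (b e)) :
    ∑ i, (x i * dx i + v i * dv i) + ∑ e, j e * dj e
      = -(∑ i, (r1 i * x i ^ 2 + r2 i * v i ^ 2)) - ∑ e, R e * j e ^ 2 := by
  have hnode : ∑ i, (x i * dx i + v i * dv i)
      = -(∑ i, (r1 i * x i ^ 2 + r2 i * v i ^ 2)) - ∑ i, v i * netCurrent a b j i := by
    simp only [← sum_neg_distrib, ← sum_sub_distrib]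
    exact sum_congr rfl fun i _ => by rw [hx, hv]; ring
  have hline : ∑ e, j e * dj e
      = -(∑ e, R e * j e ^ 2) + ∑ e, (v (a e) - v (b e)) * j e := by
    simp only [← sum_add_distrib, ← sum_neg_distrib]
    exact sum_congr rfl fun e _ => by rw [hj]; ring
  rw [hnode, hline, sum_mul_netCurrent]
  ring

section WeightedSquares

variable {ι : Type*} [Fintype ι] {w x : ι → ℝ}

theorem sum_mul_sq_nonneg (hw : ∀ i, 0 ≤ w i) : 0 ≤ ∑ i, w i * x i ^ 2 :=
  sum_nonneg fun i _ => mul_nonneg (hw i) (sq_nonneg _)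

theorem sum_mul_sq_eq_zero_iff (hw : ∀ i, 0 < w i) :
    ∑ i, w i * x i ^ 2 = 0 ↔ ∀ i, x i = 0 := by
  rw [sum_eq_zero_iff_of_nonneg fun i _ => mul_nonneg (hw i).le (sq_nonneg _)]
  simp [(hw _).ne']

end WeightedSquares

theorem dissipation_nonpos {ι κ : Type*} [Fintype ι] [Fintype κ] {p q x y : ι → ℝ}
    {w z : κ → ℝ} (hp : ∀ i, 0 ≤ p i) (hq : ∀ i, 0 ≤ q i) (hw : ∀ e, 0 ≤ w e) :
    -(∑ i, (p i * x i ^ 2 + q i * y i ^ 2)) - ∑ e, w e * z e ^ 2 ≤ 0 := by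
  rw [sum_add_distrib]
  linarith [sum_mul_sq_nonneg (x := x) hp, sum_mul_sq_nonneg (x := y) hq,
    sum_mul_sq_nonneg (x := z) hw]

theorem eq_zero_of_dissipation_eq_zero {ι κ : Type*} [Fintype ι] [Fintype κ] {p q x y : ι → ℝ}
    {w z : κ → ℝ} (hp : ∀ i, 0 < p i) (hq : ∀ i, 0 < q i) (hw : ∀ e, 0 < w e)
    (h : -(∑ i, (p i * x i ^ 2 + q i * y i ^ 2)) - ∑ e, w e * z e ^ 2 = 0) :
    (∀ i, x i = 0 ∧ y i = 0) ∧ ∀ e, z e = 0 := by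
  rw [sum_add_distrib] at h
  have hx := sum_mul_sq_nonneg (x := x) fun i => (hp i).le
  have hy := sum_mul_sq_nonneg (x := y) fun i => (hq i).le
  have hz := sum_mul_sq_nonneg (x := z) fun e => (hw e).le
  have hx0 := (sum_mul_sq_eq_zero_iff hp).1 (by linarith)
  have hy0 := (sum_mul_sq_eq_zero_iff hq).1 (by linarith)
  exact ⟨fun i => ⟨hx0 i, hy0 i⟩, (sum_mul_sq_eq_zero_iff hw).1 (by linarith)⟩

theorem microgrid_hamiltonian_dissipation_general
    (N M : ℕ) (a b : Fin M → Fin N)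
    (Lt Ct r1 Vs YL PL : Fin N → ℝ)
    (hr1 : ∀ i, 0 < r1 i)
    (hVs : ∀ i, 0 < Vs i)
    (Its : Fin N → ℝ)
    (L R : Fin M → ℝ) (hR : ∀ e, 0 < R e)
    (Is : Fin M → ℝ)
    (hlineref : ∀ e, R e * Is e = Vs (a e) - Vs (b e))
    (hnoderef : ∀ i, (∑ e ∈ univ.filter (fun e => a e = i), Is e)
        - (∑ e ∈ univ.filter (fun e => b e = i), Is e) = 0)
    (It V : Fin N → ℝ → ℝ) (I : Fin M → ℝ → ℝ)
    (hItd : ∀ i, Differentiable ℝ (It i)) (hVd : ∀ i, Differentiable ℝ (V i))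
    (hId : ∀ e, Differentiable ℝ (I e))
    (hVpos : ∀ i t, 0 < V i t)
    (hdyn1 : ∀ i t, Lt i * deriv (It i) t
        = -r1 i * (It i t - Its i) - (V i t - Vs i))
    (hdyn2 : ∀ i t, Ct i * deriv (V i) t
        = (It i t - Its i)
          - (YL i - PL i / (V i t * Vs i)) * (V i t - Vs i)
          - ((∑ e ∈ univ.filter (fun e => a e = i), I e t)
              - ∑ e ∈ univ.filter (fun e => b e = i), I e t))
    (hdyn3 : ∀ e t, L e * deriv (I e) t
        = -R e * I e t + V (a e) t - V (b e) t) :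
    ∀ t,
      deriv (fun τ =>
          (∑ i, (Lt i / 2 * (It i τ - Its i) ^ 2 + Ct i / 2 * (V i τ - Vs i) ^ 2))
            + ∑ e, L e / 2 * (I e τ - Is e) ^ 2) t
        = -(∑ i, (r1 i * (It i t - Its i) ^ 2
              + (YL i - PL i / (V i t * Vs i)) * (V i t - Vs i) ^ 2))
          - ∑ e, R e * (I e t - Is e) ^ 2 ∧
      ((∀ i, YL i * V i t * Vs i > PL i) →
        deriv (fun τ =>
            (∑ i, (Lt i / 2 * (It i τ - Its i) ^ 2 + Ct i / 2 * (V i τ - Vs i) ^ 2))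
              + ∑ e, L e / 2 * (I e τ - Is e) ^ 2) t ≤ 0 ∧
        (deriv (fun τ =>
            (∑ i, (Lt i / 2 * (It i τ - Its i) ^ 2 + Ct i / 2 * (V i τ - Vs i) ^ 2))
              + ∑ e, L e / 2 * (I e τ - Is e) ^ 2) t = 0 →
          (∀ i, It i t = Its i ∧ V i t = Vs i) ∧ ∀ e, I e t = Is e)) := by
  intro t
  have hH := ((hasDerivAt_sum_half_mul_sq_sub Lt Its It fun i => hItd i t).fun_add
    (hasDerivAt_sum_half_mul_sq_sub Ct Vs V fun i => hVd i t)).fun_add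
    (hasDerivAt_sum_half_mul_sq_sub L Is I fun e => hId e t)
  simp only [← sum_add_distrib] at hH
  have hnet : ∀ i,
      netCurrent a b (fun e => I e t - Is e) i = netCurrent a b (fun e => I e t) i := by
    intro i
    rw [show (fun e => I e t - Is e) = (fun e => I e t) - Is from rfl, netCurrent_sub, sub_eq_self]
    exact hnoderef i
  rw [hH.deriv, closedLoop_power_balance a b r1 (fun i => YL i - PL i / (V i t * Vs i)) R
    (fun i => It i t - Its i) (fun i => V i t - Vs i) _ _ (fun e => I e t - Is e) _
    (fun i => hdyn1 i t) (fun i => by rw [hdyn2, hnet]; rfl)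
    (fun e => by rw [hdyn3]; linear_combination -hlineref e)]
  refine ⟨rfl, fun hpass => ?_⟩
  have hr2 : ∀ i, 0 < YL i - PL i / (V i t * Vs i) := fun i =>
    sub_pos.2 <| (div_lt_iff₀ (mul_pos (hVpos i t) (hVs i))).2 <| by
      rw [← mul_assoc]; exact hpass i
  refine ⟨dissipation_nonpos (fun i => (hr1 i).le) (fun i => (hr2 i).le) (fun e => (hR e).le),
    fun h0 => ?_⟩
  simpa only [sub_eq_zero] using eq_zero_of_dissipation_eq_zero hr1 hr2 hR h0

/-- the microgrid Hamiltonian of the interconnected closed-loop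
DC microgrid dissipates with rate
−Σᵢ [r1(i)·(I_t(i)−I_t*(i))² + r2ᵢ(V(i))·(V(i)−V*(i))²] − Σₑ R(e)·(I(e)−I*(e))²,
which is ≤ 0 in the strictly passive load region, with equality only at the
desired operating point. -/
theorem microgrid_hamiltonian_dissipation
    (N M : ℕ) (a b : Fin M → Fin N)
    (Lt Ct r1 Vs YL ILbar PL : Fin N → ℝ)
    (hLt : ∀ i, 0 < Lt i) (hCt : ∀ i, 0 < Ct i) (hr1 : ∀ i, 0 < r1 i)
    (hVs : ∀ i, 0 < Vs i) (hYL : ∀ i, 0 < YL i) (hIL : ∀ i, 0 < ILbar i)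
    (hPL : ∀ i, 0 < PL i)
    (Its : Fin N → ℝ) (hIts : ∀ i, Its i = ZIPload (YL i) (ILbar i) (PL i) (Vs i))
    (L R : Fin M → ℝ) (hL : ∀ e, 0 < L e) (hR : ∀ e, 0 < R e)
    (Is : Fin M → ℝ)
    (hlineref : ∀ e, R e * Is e = Vs (a e) - Vs (b e))
    (hnoderef : ∀ i, (∑ e ∈ univ.filter (fun e => a e = i), Is e)
        - (∑ e ∈ univ.filter (fun e => b e = i), Is e) = 0)
    (It V : Fin N → ℝ → ℝ) (I : Fin M → ℝ → ℝ)
    (hItd : ∀ i, Differentiable ℝ (It i)) (hVd : ∀ i, Differentiable ℝ (V i))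
    (hId : ∀ e, Differentiable ℝ (I e))
    (hVpos : ∀ i t, 0 < V i t)
    (hdyn1 : ∀ i t, Lt i * deriv (It i) t
        = -r1 i * (It i t - Its i) - (V i t - Vs i))
    (hdyn2 : ∀ i t, Ct i * deriv (V i) t
        = (It i t - Its i)
          - (YL i - PL i / (V i t * Vs i)) * (V i t - Vs i)
          - ((∑ e ∈ univ.filter (fun e => a e = i), I e t)
              - ∑ e ∈ univ.filter (fun e => b e = i), I e t))
    (hdyn3 : ∀ e t, L e * deriv (I e) t
        = -R e * I e t + V (a e) t - V (b e) t) :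
    ∀ t,
      deriv (fun τ =>
          (∑ i, (Lt i / 2 * (It i τ - Its i) ^ 2 + Ct i / 2 * (V i τ - Vs i) ^ 2))
            + ∑ e, L e / 2 * (I e τ - Is e) ^ 2) t
        = -(∑ i, (r1 i * (It i t - Its i) ^ 2
              + (YL i - PL i / (V i t * Vs i)) * (V i t - Vs i) ^ 2))
          - ∑ e, R e * (I e t - Is e) ^ 2 ∧
      ((∀ i, YL i * V i t * Vs i > PL i) →
        deriv (fun τ =>
            (∑ i, (Lt i / 2 * (It i τ - Its i) ^ 2 + Ct i / 2 * (V i τ - Vs i) ^ 2))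
              + ∑ e, L e / 2 * (I e τ - Is e) ^ 2) t ≤ 0 ∧
        (deriv (fun τ =>
            (∑ i, (Lt i / 2 * (It i τ - Its i) ^ 2 + Ct i / 2 * (V i τ - Vs i) ^ 2))
              + ∑ e, L e / 2 * (I e τ - Is e) ^ 2) t = 0 →
          (∀ i, It i t = Its i ∧ V i t = Vs i) ∧ ∀ e, I e t = Is e)) :=
  microgrid_hamiltonian_dissipation_general N M a b Lt Ct r1 Vs YL PL hr1 hVs Its L R hR Is hlineref
    hnoderef It V I hItd hVd hId hVpos hdyn1 hdyn2 hdyn3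
end
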